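/- Let d ≥ 1, let Ω ⊆ ℝ² be open and bounded, let ε > 0, and let f : ℝ^d → [0, ∞) be continuous with f(v) > f(v/|v|) whenever |v| > 1. Suppose u : Ω̄ → ℝ^d is Lipschitz, satisfies |u(x)| ≤ 1 for all x ∈ ∂Ω, and minimizes the functional w ↦ ∫_Ω ( (1/2)|∇w(x)|² + ε⁻² f(w(x)) ) dx among all Lipschitz maps w : Ω̄ → ℝ^d with w = u on ∂Ω. Then |u(x)| ≤ 1 for all x ∈ Ω̄. -/

import Mathlib

/-!
Retract `u` radially onto the closed unit ball: `w = u / max 1 |u|`. The retraction is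
1-Lipschitz, so `w` is Lipschitz, agrees with `u` on `∂Ω` (where `|u| ≤ 1`), and by
Rademacher's theorem `|∇w| ≤ |∇u|` almost everywhere; moreover `f(w) ≤ f(u)`, strictly where
`|u| > 1`. If `|u(x₀)| > 1` for some `x₀ ∈ Ω̄`, then `x₀ ∈ Ω` and `|u| > 1` on a nonempty
open set, so `w` has strictly smaller energy than the minimizer `u`.
-/

open Metric Set MeasureTheory

noncomputable section

abbrev E2 : Type := EuclideanSpace ℝ (Fin 2)

/-- Squared Euclidean (Hilbert–Schmidt) norm of the gradient of u : ℝ² → ℝ^d. -/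
def gradSqV (d : ℕ) (u : E2 → EuclideanSpace ℝ (Fin d)) (x : E2) : ℝ :=
  ∑ i, ‖fderiv ℝ (fun y => u y i) x‖ ^ 2

/-- The energy ∫_U ( (1/2)|∇u|² + ε⁻² f(u) ). -/
def energyV (d : ℕ) (ε : ℝ) (f : EuclideanSpace ℝ (Fin d) → ℝ)
    (u : E2 → EuclideanSpace ℝ (Fin d)) (U : Set E2) : ℝ :=
  ∫ x in U, ((1/2) * gradSqV d u x + (1/ε^2) * f (u x))

open Filter Topology

lemma inv_max_one_mul_self (r : ℝ) : (max 1 r)⁻¹ * r = min r 1 := by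
  rcases le_total r 1 with h | h
  · simp [max_eq_left h, min_eq_left h]
  · rw [max_eq_right h, min_eq_right h, inv_mul_cancel₀ (by linarith)]

theorem MeasureTheory.integral_lt_integral_of_ae_le_of_measure_setOf_lt_ne_zero {α : Type*}
    [MeasurableSpace α] {μ : Measure α} {f g : α → ℝ} (hfi : Integrable f μ)
    (hgi : Integrable g μ) (hle : f ≤ᵐ[μ] g) (hlt : μ {x | f x < g x} ≠ 0) :
    ∫ x, f x ∂μ < ∫ x, g x ∂μ := by
  rw [← sub_pos, ← integral_sub hgi hfi, integral_pos_iff_support_of_nonneg_ae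
    (hle.mono fun x => sub_nonneg.2) (hgi.sub hfi)]
  refine pos_iff_ne_zero.2 (mt (measure_mono_null ?_) hlt)
  exact fun x hx => (sub_pos.2 hx).ne'

lemma ContinuousLinearMap.norm_sq_eq_sum_sq_apply {ι E : Type*} [Fintype ι]
    [NormedAddCommGroup E] [InnerProductSpace ℝ E] [CompleteSpace E]
    (b : OrthonormalBasis ι ℝ E) (ℓ : E →L[ℝ] ℝ) :
    ‖ℓ‖ ^ 2 = ∑ i, ℓ (b i) ^ 2 := by
  set v := (InnerProductSpace.toDual ℝ E).symm ℓ
  calc ‖ℓ‖ ^ 2 = ‖v‖ ^ 2 := by rw [LinearIsometryEquiv.norm_map]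
    _ = ∑ i, inner ℝ v (b i) ^ 2 := (b.sum_sq_inner_left v).symm
    _ = ∑ i, ℓ (b i) ^ 2 := by simp_rw [v, InnerProductSpace.toDual_symm_apply]

lemma HasFDerivAt.norm_apply_le_of_norm_sub_le {E F G : Type*} [NormedAddCommGroup E]
    [NormedSpace ℝ E] [NormedAddCommGroup F] [NormedSpace ℝ F] [NormedAddCommGroup G]
    [NormedSpace ℝ G] {f : E → F} {g : E → G} {A : E →L[ℝ] F} {B : E →L[ℝ] G} {x : E}
    (hf : HasFDerivAt f A x) (hg : HasFDerivAt g B x)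
    (h : ∀ y, ‖f y - f x‖ ≤ ‖g y - g x‖) (e : E) : ‖A e‖ ≤ ‖B e‖ := by
  have hf' := (hasDerivAt_iff_tendsto_slope.1 (hf.hasLineDerivAt e)).norm
  have hg' := (hasDerivAt_iff_tendsto_slope.1 (hg.hasLineDerivAt e)).norm
  refine le_of_tendsto_of_tendsto hf' hg' (Eventually.of_forall fun t => ?_)
  simp only [slope_def_module, sub_zero, zero_smul, add_zero, norm_smul]
  exact mul_le_mul_of_nonneg_left (h _) (norm_nonneg _)

section RadialRetraction

variable {E : Type*} [NormedAddCommGroup E] [InnerProductSpace ℝ E]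

def radialRetraction (v : E) : E := (max 1 ‖v‖)⁻¹ • v

lemma radialRetraction_of_norm_le_one {v : E} (hv : ‖v‖ ≤ 1) : radialRetraction v = v := by
  simp [radialRetraction, max_eq_left hv]

lemma radialRetraction_of_one_lt_norm {v : E} (hv : 1 < ‖v‖) :
    radialRetraction v = ‖v‖⁻¹ • v := by
  simp [radialRetraction, max_eq_right hv.le]

/-- With `a = (max 1 ‖v‖)⁻¹`, `b = (max 1 ‖w‖)⁻¹`, `r = ‖v‖`, `s = ‖w‖`:
`‖v - w‖² - ‖a v - b w‖² = (r - s)² - (a r - b s)² + 2 (1 - a b) (r s - ⟪v, w⟫)`,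
and `a r = min r 1` is a 1-Lipschitz function of `r`. -/
lemma lipschitzWith_one_radialRetraction : LipschitzWith 1 (radialRetraction (E := E)) := by
  refine LipschitzWith.of_dist_le_mul fun v w => ?_
  rw [NNReal.coe_one, one_mul, dist_eq_norm, dist_eq_norm]
  set a := (max 1 ‖v‖)⁻¹
  set b := (max 1 ‖w‖)⁻¹
  have ha : 0 ≤ a ∧ a ≤ 1 := ⟨by positivity, inv_le_one_of_one_le₀ (le_max_left _ _)⟩
  have hb : 0 ≤ b ∧ b ≤ 1 := ⟨by positivity, inv_le_one_of_one_le₀ (le_max_left _ _)⟩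
  have hmin : |a * ‖v‖ - b * ‖w‖| ≤ |‖v‖ - ‖w‖| := by
    simpa [a, b, inv_max_one_mul_self] using abs_min_sub_min_le_max ‖v‖ 1 ‖w‖ 1
  have hcs : inner ℝ v w ≤ ‖v‖ * ‖w‖ := real_inner_le_norm v w
  have hsq : ‖a • v - b • w‖ ^ 2 ≤ ‖v - w‖ ^ 2 := by
    rw [norm_sub_sq_real, norm_sub_sq_real, real_inner_smul_left, real_inner_smul_right,
      norm_smul, norm_smul, Real.norm_of_nonneg ha.1, Real.norm_of_nonneg hb.1]
    nlinarith [sq_le_sq.2 hmin, mul_nonneg (sub_nonneg.2 (mul_le_one₀ ha.2 hb.1 hb.2))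
      (sub_nonneg.2 hcs)]
  exact pow_le_pow_iff_left₀ (norm_nonneg _) (norm_nonneg _) two_ne_zero |>.1 hsq

lemma apply_radialRetraction_le {F : Type*} [LinearOrder F] {f : E → F}
    (hf : ∀ v : E, 1 < ‖v‖ → f (‖v‖⁻¹ • v) < f v) (v : E) :
    f (radialRetraction v) ≤ f v := by
  rcases le_or_gt ‖v‖ 1 with h | h
  · rw [radialRetraction_of_norm_le_one h]
  · rw [radialRetraction_of_one_lt_norm h]
    exact (hf v h).le

end RadialRetraction

lemma gradSqV_eq_sum_sq_norm_fderiv_apply {ι : Type*} [Fintype ι] (b : OrthonormalBasis ι ℝ E2)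
    {d : ℕ} {u : E2 → EuclideanSpace ℝ (Fin d)} {x : E2} (hu : DifferentiableAt ℝ u x) :
    gradSqV d u x = ∑ j, ‖fderiv ℝ u x (b j)‖ ^ 2 := by
  have hcoord : ∀ i,
      fderiv ℝ (fun y => u y i) x = (EuclideanSpace.proj i).comp (fderiv ℝ u x) :=
    fun i => ((EuclideanSpace.proj (𝕜 := ℝ) i).hasFDerivAt.comp x hu.hasFDerivAt).fderiv
  simp_rw [gradSqV, hcoord, ContinuousLinearMap.norm_sq_eq_sum_sq_apply b,
    EuclideanSpace.real_norm_sq_eq]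
  exact Finset.sum_comm

/-- No chain rule: `g` need not be differentiable (the radial retraction is not, on the unit
sphere), so difference quotients are compared directly. -/
lemma gradSqV_comp_le {d d' : ℕ} {g : EuclideanSpace ℝ (Fin d) → EuclideanSpace ℝ (Fin d')}
    (hg : LipschitzWith 1 g) {u : E2 → EuclideanSpace ℝ (Fin d)} {x : E2}
    (hu : DifferentiableAt ℝ u x) (hgu : DifferentiableAt ℝ (g ∘ u) x) :
    gradSqV d' (g ∘ u) x ≤ gradSqV d u x := by
  let b := EuclideanSpace.basisFun (Fin 2) ℝ
  rw [gradSqV_eq_sum_sq_norm_fderiv_apply b hu, gradSqV_eq_sum_sq_norm_fderiv_apply b hgu]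
  have hdist (y : E2) : ‖g (u y) - g (u x)‖ ≤ ‖u y - u x‖ := by
    simpa [dist_eq_norm] using hg.dist_le_mul (u y) (u x)
  gcongr with j
  exact hgu.hasFDerivAt.norm_apply_le_of_norm_sub_le hu.hasFDerivAt hdist (b j)

lemma ae_gradSqV_comp_le {d d' : ℕ}
    {g : EuclideanSpace ℝ (Fin d) → EuclideanSpace ℝ (Fin d')} (hg : LipschitzWith 1 g)
    {u : E2 → EuclideanSpace ℝ (Fin d)} {L : NNReal} {Ω : Set E2} (hΩ : IsOpen Ω)
    (hu : LipschitzOnWith L u Ω) :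
    ∀ᵐ x ∂volume.restrict Ω, gradSqV d' (g ∘ u) x ≤ gradSqV d u x := by
  have hgu : LipschitzOnWith (1 * L) (g ∘ u) Ω := hg.comp_lipschitzOnWith hu
  filter_upwards [hu.ae_differentiableWithinAt hΩ.measurableSet,
    hgu.ae_differentiableWithinAt hΩ.measurableSet, ae_restrict_mem hΩ.measurableSet]
    with x hdu hdgu hx
  exact gradSqV_comp_le hg (hdu.differentiableAt (hΩ.mem_nhds hx))
    (hdgu.differentiableAt (hΩ.mem_nhds hx))

lemma gradSqV_le_of_lipschitzOnWith {d : ℕ} {u : E2 → EuclideanSpace ℝ (Fin d)} {L : NNReal}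
    {s : Set E2} {x : E2} (hs : s ∈ 𝓝 x) (hu : LipschitzOnWith L u s) :
    gradSqV d u x ≤ d * (L : ℝ) ^ 2 := by
  have hcoord (i : Fin d) : LipschitzWith 1 fun v : EuclideanSpace ℝ (Fin d) => v i :=
    LipschitzWith.of_dist_le_mul fun v w => by simpa using PiLp.dist_apply_le v w i
  calc gradSqV d u x ≤ ∑ _i : Fin d, (L : ℝ) ^ 2 := by
        unfold gradSqV; gcongr with i
        simpa [Function.comp_def] using
          norm_fderiv_le_of_lipschitzOn ℝ hs ((hcoord i).comp_lipschitzOnWith hu)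
    _ = d * (L : ℝ) ^ 2 := by simp

def energyDensity (d : ℕ) (ε : ℝ) (f : EuclideanSpace ℝ (Fin d) → ℝ)
    (u : E2 → EuclideanSpace ℝ (Fin d)) (x : E2) : ℝ :=
  (1/2) * gradSqV d u x + (1/ε^2) * f (u x)

lemma energyV_eq_setIntegral_energyDensity (d : ℕ) (ε : ℝ)
    (f : EuclideanSpace ℝ (Fin d) → ℝ) (u : E2 → EuclideanSpace ℝ (Fin d)) (U : Set E2) :
    energyV d ε f u U = ∫ x in U, energyDensity d ε f u x :=
  rfl

lemma integrableOn_energyDensity {d : ℕ} (ε : ℝ) {f : EuclideanSpace ℝ (Fin d) → ℝ}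
    (hf : Continuous f) {Ω : Set E2} (hΩ : IsOpen Ω) (hΩb : Bornology.IsBounded Ω)
    {u : E2 → EuclideanSpace ℝ (Fin d)} {L : NNReal} (hu : LipschitzOnWith L u (closure Ω)) :
    IntegrableOn (energyDensity d ε f u) Ω := by
  have hcpt : IsCompact (closure Ω) := hΩb.isCompact_closure
  refine Integrable.add (Integrable.const_mul ?_ _) (Integrable.const_mul ?_ _)
  · refine Measure.integrableOn_of_bounded (M := d * (L : ℝ) ^ 2)
      (measure_mono subset_closure |>.trans_lt hcpt.measure_lt_top).ne ?_ ?_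
    · exact (Finset.measurable_sum _ fun i _ =>
        ((measurable_fderiv ℝ _).norm).pow_const 2).aestronglyMeasurable
    · filter_upwards [ae_restrict_mem hΩ.measurableSet] with x hx
      rw [Real.norm_of_nonneg (by unfold gradSqV; positivity)]
      exact gradSqV_le_of_lipschitzOnWith (mem_of_superset (hΩ.mem_nhds hx) subset_closure) hu
  · exact ((hf.comp_continuousOn hu.continuousOn).integrableOn_compact hcpt).mono_set
      subset_closure

lemma energyDensity_comp_radialRetraction_le {d : ℕ} {ε : ℝ}
    {f : EuclideanSpace ℝ (Fin d) → ℝ}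
    (hf_gt : ∀ v : EuclideanSpace ℝ (Fin d), 1 < ‖v‖ → f (‖v‖⁻¹ • v) < f v)
    {u : E2 → EuclideanSpace ℝ (Fin d)} {x : E2}
    (hgrad : gradSqV d (radialRetraction ∘ u) x ≤ gradSqV d u x) :
    energyDensity d ε f (radialRetraction ∘ u) x ≤ energyDensity d ε f u x := by
  unfold energyDensity
  gcongr
  exact apply_radialRetraction_le hf_gt (u x)

lemma energyDensity_comp_radialRetraction_lt {d : ℕ} {ε : ℝ} (hε : ε ≠ 0)
    {f : EuclideanSpace ℝ (Fin d) → ℝ}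
    (hf_gt : ∀ v : EuclideanSpace ℝ (Fin d), 1 < ‖v‖ → f (‖v‖⁻¹ • v) < f v)
    {u : E2 → EuclideanSpace ℝ (Fin d)} {x : E2}
    (hgrad : gradSqV d (radialRetraction ∘ u) x ≤ gradSqV d u x) (hux : 1 < ‖u x‖) :
    energyDensity d ε f (radialRetraction ∘ u) x < energyDensity d ε f u x := by
  have hf : f (radialRetraction (u x)) < f (u x) := by
    rw [radialRetraction_of_one_lt_norm hux]
    exact hf_gt _ hux
  exact add_lt_add_of_le_of_lt (by gcongr) (by unfold Function.comp; gcongr)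

lemma energyV_comp_radialRetraction_lt {d : ℕ} {ε : ℝ} (hε : ε ≠ 0)
    {f : EuclideanSpace ℝ (Fin d) → ℝ} (hf : Continuous f)
    (hf_gt : ∀ v : EuclideanSpace ℝ (Fin d), 1 < ‖v‖ → f (‖v‖⁻¹ • v) < f v)
    {Ω : Set E2} (hΩ : IsOpen Ω) (hΩb : Bornology.IsBounded Ω)
    {u : E2 → EuclideanSpace ℝ (Fin d)} {L : NNReal} (hu : LipschitzOnWith L u (closure Ω))
    {x₀ : E2} (hx₀ : x₀ ∈ Ω) (hux₀ : 1 < ‖u x₀‖) :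
    energyV d ε f (radialRetraction ∘ u) Ω < energyV d ε f u Ω := by
  have hP := lipschitzWith_one_radialRetraction (E := EuclideanSpace ℝ (Fin d))
  have hgrad := ae_gradSqV_comp_le hP hΩ (hu.mono subset_closure)
  set U := Ω ∩ u ⁻¹' {v | 1 < ‖v‖}
  have hU : IsOpen U := (hu.continuousOn.mono subset_closure).isOpen_inter_preimage hΩ
    (isOpen_lt continuous_const continuous_norm)
  have hUlt : U ≤ᵐ[volume.restrict Ω] {x | energyDensity d ε f (radialRetraction ∘ u) x <
      energyDensity d ε f u x} := by
    filter_upwards [hgrad] with x hx hxU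
    exact energyDensity_comp_radialRetraction_lt hε hf_gt hx hxU.2
  rw [energyV_eq_setIntegral_energyDensity, energyV_eq_setIntegral_energyDensity]
  refine integral_lt_integral_of_ae_le_of_measure_setOf_lt_ne_zero
    (integrableOn_energyDensity ε hf hΩ hΩb (hP.comp_lipschitzOnWith hu))
    (integrableOn_energyDensity ε hf hΩ hΩb hu)
    (hgrad.mono fun x hx => energyDensity_comp_radialRetraction_le hf_gt hx) (ne_of_gt ?_)
  calc 0 < volume U := hU.measure_pos volume ⟨x₀, hx₀, hux₀⟩
    _ = volume.restrict Ω U := by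
      rw [Measure.restrict_apply hU.measurableSet, inter_eq_left.2 inter_subset_left]
    _ ≤ _ := measure_mono_ae hUlt

theorem stmt16_general (d : ℕ)
    (Ω : Set E2) (hΩ_open : IsOpen Ω) (hΩ_bdd : Bornology.IsBounded Ω)
    (ε : ℝ) (hε : 0 < ε)
    (f : EuclideanSpace ℝ (Fin d) → ℝ) (hf_cont : Continuous f)
    (hf_gt : ∀ v : EuclideanSpace ℝ (Fin d), 1 < ‖v‖ → f (‖v‖⁻¹ • v) < f v)
    (u : E2 → EuclideanSpace ℝ (Fin d))
    (hu_lip : ∃ L : NNReal, LipschitzOnWith L u (closure Ω))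
    (hu_bd : ∀ x ∈ frontier Ω, ‖u x‖ ≤ 1)
    (hu_min : ∀ w : E2 → EuclideanSpace ℝ (Fin d),
      (∃ L : NNReal, LipschitzOnWith L w (closure Ω)) →
      (∀ x ∈ frontier Ω, w x = u x) →
      energyV d ε f u Ω ≤ energyV d ε f w Ω) :
    ∀ x ∈ closure Ω, ‖u x‖ ≤ 1 := by
  intro x hx
  by_contra! hux
  obtain ⟨L, hL⟩ := hu_lip
  have hxΩ : x ∈ Ω := by
    by_contra hxΩ
    exact hux.not_ge (hu_bd x (hΩ_open.frontier_eq ▸ ⟨hx, hxΩ⟩))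
  have hmin := hu_min (radialRetraction ∘ u)
    ⟨_, lipschitzWith_one_radialRetraction.comp_lipschitzOnWith hL⟩
    fun y hy => radialRetraction_of_norm_le_one (hu_bd y hy)
  exact hmin.not_gt
    (energyV_comp_radialRetraction_lt hε.ne' hf_cont hf_gt hΩ_open hΩ_bdd hL hxΩ hux)

/-- L^∞ bound for minimizers: if f(v) > f(v/|v|) for |v| > 1, u is Lipschitz on Ω̄ with
|u| ≤ 1 on ∂Ω and u minimizes the energy among Lipschitz maps with its own boundary
values, then |u| ≤ 1 on all of Ω̄. -/
theorem stmt16 (d : ℕ) (hd : 1 ≤ d)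
    (Ω : Set E2) (hΩ_open : IsOpen Ω) (hΩ_bdd : Bornology.IsBounded Ω)
    (ε : ℝ) (hε : 0 < ε)
    (f : EuclideanSpace ℝ (Fin d) → ℝ) (hf_cont : Continuous f)
    (hf_nonneg : ∀ v, 0 ≤ f v)
    (hf_gt : ∀ v : EuclideanSpace ℝ (Fin d), 1 < ‖v‖ → f (‖v‖⁻¹ • v) < f v)
    (u : E2 → EuclideanSpace ℝ (Fin d))
    (hu_lip : ∃ L : NNReal, LipschitzOnWith L u (closure Ω))
    (hu_bd : ∀ x ∈ frontier Ω, ‖u x‖ ≤ 1)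
    (hu_min : ∀ w : E2 → EuclideanSpace ℝ (Fin d),
      (∃ L : NNReal, LipschitzOnWith L w (closure Ω)) →
      (∀ x ∈ frontier Ω, w x = u x) →
      energyV d ε f u Ω ≤ energyV d ε f w Ω) :
    ∀ x ∈ closure Ω, ‖u x‖ ≤ 1 :=
  stmt16_general d Ω hΩ_open hΩ_bdd ε hε f hf_cont hf_gt u hu_lip hu_bd hu_min
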